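/- On the two-dimensional logical subspace spanned by |0_L⟩ = (1/√2)(|010⟩-|100⟩) and |1_L⟩ = (1/√6)(2|001⟩-|100⟩-|010⟩), the linear combination -(1/√3)S₁₂ - (2/√3)S₁₃ of swap operators acts as the Pauli X matrix, and -S₁₂ acts as the Pauli Z matrix. -/

import Mathlib

/-!
The swaps permute the basis kets, so `S₁₂` is `-1` on `|0_L⟩` (antisymmetric in the first two
factors) and `+1` on `|1_L⟩` (symmetric in them), while `S₁₃` sends both logical states to
explicit combinations of kets. The Pauli `X` identities are then linear-algebra identities whose
scalar content is `√6 = √2 · √3` and `(1/√3)² = 1/3`.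
-/

noncomputable section

abbrev Q3 := Fin 2 × Fin 2 × Fin 2

/-- Swap of tensor factors 1 and 2. -/
def S12 : (Q3 → ℂ) →ₗ[ℂ] (Q3 → ℂ) :=
  LinearMap.funLeft ℂ ℂ fun x : Q3 => (x.2.1, x.1, x.2.2)

/-- Swap of tensor factors 1 and 3. -/
def S13 : (Q3 → ℂ) →ₗ[ℂ] (Q3 → ℂ) :=
  LinearMap.funLeft ℂ ℂ fun x : Q3 => (x.2.2, x.2.1, x.1)

def ket (a b c : Fin 2) : Q3 → ℂ := fun x => if x = (a, b, c) then 1 else 0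

def v0 : Q3 → ℂ := ((Real.sqrt 2 : ℂ))⁻¹ • (ket 0 1 0 - ket 1 0 0)

def v1 : Q3 → ℂ := ((Real.sqrt 6 : ℂ))⁻¹ • ((2 : ℂ) • ket 0 0 1 - ket 1 0 0 - ket 0 1 0)

theorem S12_ket (a b c : Fin 2) : S12 (ket a b c) = ket b a c := by
  ext ⟨x, y, z⟩
  simp only [S12, LinearMap.funLeft_apply, ket, Prod.mk.injEq]
  congr 1
  exact propext ⟨fun ⟨h1, h2, h3⟩ => ⟨h2, h1, h3⟩, fun ⟨h1, h2, h3⟩ => ⟨h2, h1, h3⟩⟩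

theorem S13_ket (a b c : Fin 2) : S13 (ket a b c) = ket c b a := by
  ext ⟨x, y, z⟩
  simp only [S13, LinearMap.funLeft_apply, ket, Prod.mk.injEq]
  congr 1
  exact propext ⟨fun ⟨h1, h2, h3⟩ => ⟨h3, h2, h1⟩, fun ⟨h1, h2, h3⟩ => ⟨h3, h2, h1⟩⟩

theorem S12_v0 : S12 v0 = -v0 := by
  simp only [v0, map_smul, map_sub, S12_ket]
  module

theorem S12_v1 : S12 v1 = v1 := by
  simp only [v1, map_smul, map_sub, S12_ket]
  module

theorem S13_v0 : S13 v0 = (Real.sqrt 2 : ℂ)⁻¹ • (ket 0 1 0 - ket 0 0 1) := by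
  simp only [v0, map_smul, map_sub, S13_ket]

theorem S13_v1 :
    S13 v1 = (Real.sqrt 6 : ℂ)⁻¹ • ((2 : ℂ) • ket 1 0 0 - ket 0 0 1 - ket 0 1 0) := by
  simp only [v1, map_smul, map_sub, S13_ket]

theorem inv_sqrt_six : (Real.sqrt 6 : ℂ)⁻¹ = (Real.sqrt 2 : ℂ)⁻¹ * (Real.sqrt 3 : ℂ)⁻¹ := by
  rw [← mul_inv, ← Complex.ofReal_mul, ← Real.sqrt_mul (by norm_num)]
  norm_num

theorem inv_sqrt_three_sq : ((Real.sqrt 3 : ℂ)⁻¹) ^ 2 = 3⁻¹ := by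
  rw [inv_pow, ← Complex.ofReal_pow, Real.sq_sqrt (by norm_num)]
  norm_num

/-- with respect to the ordered basis `(|0_L⟩, |1_L⟩)`, the operator
`-(1/√3)S₁₂ - (2/√3)S₁₃` acts as Pauli `X` and `-S₁₂` acts as Pauli `Z`. -/
theorem stmt4 :
    ((-(Real.sqrt 3 : ℂ)⁻¹) • S12 - ((2 : ℂ) * (Real.sqrt 3 : ℂ)⁻¹) • S13) v0 = v1
    ∧ ((-(Real.sqrt 3 : ℂ)⁻¹) • S12 - ((2 : ℂ) * (Real.sqrt 3 : ℂ)⁻¹) • S13) v1 = v0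
    ∧ (-S12) v0 = v0
    ∧ (-S12) v1 = -v1 := by
  simp only [LinearMap.sub_apply, LinearMap.smul_apply, LinearMap.neg_apply,
    S12_v0, S12_v1, S13_v0, S13_v1]
  refine ⟨?_, ?_, neg_neg v0, trivial⟩
  · simp only [v0, v1, inv_sqrt_six]
    module
  · simp only [v0, v1, inv_sqrt_six]
    linear_combination (norm := module)
      (3 * (Real.sqrt 2 : ℂ)⁻¹) • inv_sqrt_three_sq • (ket 0 1 0 - ket 1 0 0)

end
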